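/- For every integer ℓ ≥ 2, the oriented discrepancy of directed rooted subtrees of the star S_ℓ with ℓ leaves equals ⌈ℓ/2⌉ + 1. -/

import Mathlib

/-!
Index the edges of the star by its leaves. An orientation is then determined by the set `K` of
leaves whose edge points away from the centre. Rooted at the centre, a subtree with leaf set `A`
has imbalance `|2 #(A ∩ K) - #A|`; rooted at a leaf `j`, the same holds with `K` toggled at `j`.
So orienting `⌈ℓ/2⌉` edges outwards bounds every imbalance by `max(#K, #Kᶜ) + 1 = ⌈ℓ/2⌉ + 1`.
Conversely, if `#K ≥ ℓ/2` and some leaf `j ∉ K`, the subtree on `K ∪ {j}` rooted at `j` has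
all `#K + 1` edges agreeing with the orientation, and symmetrically for `Kᶜ`; if `K` is empty
or everything, the whole star rooted at the centre has imbalance `ℓ ≥ ⌈ℓ/2⌉ + 1`.
-/

open SimpleGraph

namespace SimpleGraph

variable {V : Type*} (G : SimpleGraph V)

def IsOrientation (σ : V → V → Prop) : Prop :=
  ∀ u v, G.Adj u v → (σ u v ↔ ¬ σ v u)

/-- In a tree, the edge `s(x, y)` directed away from `u` goes from `x` to `y` exactly when
`y` is one step further from `u` than `x`. -/
def OrientedAwayFrom (σ : V → V → Prop) (u : V) (e : Sym2 V) : Prop :=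
  ∃ x y, e = s(x, y) ∧ G.dist u y = G.dist u x + 1 ∧ σ x y

noncomputable def orientedImbalance (σ : V → V → Prop) (S : G.Subgraph) (u : V) : ℤ :=
  |2 * ({e ∈ S.edgeSet | G.OrientedAwayFrom σ u e}.ncard : ℤ) - S.edgeSet.ncard|

variable {G}

lemma Subgraph.induce_top_connected_of_forall_adj {s : Set V} {c : V} (hc : c ∈ s)
    (hadj : ∀ v ∈ s, v ≠ c → G.Adj c v) : ((⊤ : G.Subgraph).induce s).Connected := by
  rw [Subgraph.connected_iff', connected_iff_exists_forall_reachable]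
  refine ⟨⟨c, hc⟩, fun ⟨v, hv⟩ => ?_⟩
  by_cases hvc : v = c
  · subst hvc; rfl
  · exact Adj.reachable (show ((⊤ : G.Subgraph).induce s).Adj c v from ⟨hc, hv, hadj v hv hvc⟩)

end SimpleGraph

lemma Set.abs_two_mul_ncard_inter_sub_ncard_le {α : Type*} [Finite α] (A : Set α) {Q : Set α}
    {b : ℕ} (hQ : Q.ncard ≤ b) (hQc : Qᶜ.ncard ≤ b) :
    |2 * ((A ∩ Q).ncard : ℤ) - A.ncard| ≤ b := by
  have hsplit := Set.ncard_inter_add_ncard_sdiff_eq_ncard A Q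
  have hin : (A ∩ Q).ncard ≤ Q.ncard := Set.ncard_le_ncard Set.inter_subset_right
  have hout : (A \ Q).ncard ≤ Qᶜ.ncard := Set.ncard_le_ncard (Set.sdiff_subset_compl A Q)
  rw [abs_le]
  omega

lemma Fin.ncard_setOf_val_lt {ℓ t : ℕ} (ht : t ≤ ℓ) : {i : Fin ℓ | (i : ℕ) < t}.ncard = t := by
  rw [Set.ncard_eq_toFinset_card', Set.toFinset_ofPred, Fin.card_filter_val_lt]
  omega

lemma Rat.ceil_natCast_div_two (n : ℕ) : ⌈(n : ℚ) / 2⌉ = (((n + 1) / 2 : ℕ) : ℤ) := by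
  have := Rat.ceil_natCast_div_natCast n 2
  push_cast at this
  omega

namespace StarDiscrepancy

variable {ℓ : ℕ}

abbrev star (ℓ : ℕ) : SimpleGraph (Unit ⊕ Fin ℓ) := completeBipartiteGraph Unit (Fin ℓ)

abbrev center : Unit ⊕ Fin ℓ := Sum.inl ()

def spoke (i : Fin ℓ) : Sym2 (Unit ⊕ Fin ℓ) := s(center, Sum.inr i)

lemma spoke_injective : Function.Injective (spoke (ℓ := ℓ)) := fun i j h => by
  simpa [spoke] using h

lemma edgeSet_star_subset_range_spoke : (star ℓ).edgeSet ⊆ Set.range spoke := by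
  intro e he
  induction e with
  | _ x y =>
    rcases x with ⟨⟩ | i <;> rcases y with ⟨⟩ | j <;> simp at he
    · exact ⟨j, rfl⟩
    · exact ⟨i, Sym2.eq_swap⟩

lemma dist_leaf_center (i : Fin ℓ) : (star ℓ).dist (Sum.inr i) center = 1 :=
  dist_eq_one_iff_adj.2 (by simp)

lemma dist_leaf_eq_dist_center_add_one {u : Unit ⊕ Fin ℓ} {i : Fin ℓ} (hu : u ≠ Sum.inr i) :
    (star ℓ).dist u (Sum.inr i) = (star ℓ).dist u center + 1 := by
  rcases u with ⟨⟩ | j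
  · rw [dist_self, dist_comm, dist_leaf_center]
  · have hji : j ≠ i := fun h => hu (h ▸ rfl)
    let w : (star ℓ).Walk (Sum.inr j) (Sum.inr i) :=
      .cons (show (star ℓ).Adj (Sum.inr j) center by simp)
        (.cons (show (star ℓ).Adj center (Sum.inr i) by simp) .nil)
    have hle : (star ℓ).dist (Sum.inr j) (Sum.inr i) ≤ 2 := dist_le w
    have hne : (star ℓ).dist (Sum.inr j) (Sum.inr i) ≠ 1 := by simp [dist_eq_one_iff_adj]
    have hpos : 0 < (star ℓ).dist (Sum.inr j) (Sum.inr i) :=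
      w.reachable.pos_dist_of_ne (by simpa using hji)
    rw [dist_leaf_center]
    omega

def agreeSet (σ : Unit ⊕ Fin ℓ → Unit ⊕ Fin ℓ → Prop) (u : Unit ⊕ Fin ℓ) : Set (Fin ℓ) :=
  spoke ⁻¹' {e | (star ℓ).OrientedAwayFrom σ u e}

def outSet (σ : Unit ⊕ Fin ℓ → Unit ⊕ Fin ℓ → Prop) : Set (Fin ℓ) :=
  {i | σ center (Sum.inr i)}

variable {σ : Unit ⊕ Fin ℓ → Unit ⊕ Fin ℓ → Prop}

lemma mem_agreeSet_iff {u : Unit ⊕ Fin ℓ} {i : Fin ℓ} :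
    i ∈ agreeSet σ u ↔
      (star ℓ).dist u (Sum.inr i) = (star ℓ).dist u center + 1 ∧ σ center (Sum.inr i) ∨
      (star ℓ).dist u center = (star ℓ).dist u (Sum.inr i) + 1 ∧ σ (Sum.inr i) center := by
  simp only [agreeSet, OrientedAwayFrom, spoke, Set.mem_preimage, Set.mem_ofPred_eq, Sym2.eq_iff]
  constructor
  · rintro ⟨x, y, ⟨rfl, rfl⟩ | ⟨rfl, rfl⟩, h⟩
    exacts [.inl h, .inr h]
  · rintro (h | h)
    exacts [⟨_, _, .inl ⟨rfl, rfl⟩, h⟩, ⟨_, _, .inr ⟨rfl, rfl⟩, h⟩]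

lemma mem_agreeSet_of_ne {u : Unit ⊕ Fin ℓ} {i : Fin ℓ} (hu : u ≠ Sum.inr i) :
    i ∈ agreeSet σ u ↔ i ∈ outSet σ := by
  have hd : (star ℓ).dist u center ≠ (star ℓ).dist u center + 1 + 1 := by omega
  simp [mem_agreeSet_iff, dist_leaf_eq_dist_center_add_one hu, hd, outSet]

lemma mem_agreeSet_self (hσ : (star ℓ).IsOrientation σ) (j : Fin ℓ) :
    j ∈ agreeSet σ (Sum.inr j) ↔ j ∉ outSet σ := by
  simp [mem_agreeSet_iff, dist_leaf_center, outSet, hσ (Sum.inr j) center (by simp)]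

lemma agreeSet_center : agreeSet σ center = outSet σ :=
  Set.ext fun _ => mem_agreeSet_of_ne Sum.inl_ne_inr

lemma orientedImbalance_star_eq (S : (star ℓ).Subgraph) (u : Unit ⊕ Fin ℓ) :
    (star ℓ).orientedImbalance σ S u =
      |2 * ((spoke ⁻¹' S.edgeSet ∩ agreeSet σ u).ncard : ℤ) - (spoke ⁻¹' S.edgeSet).ncard| := by
  have hrange : ∀ E ⊆ S.edgeSet, (spoke ⁻¹' E).ncard = E.ncard := fun E hE =>
    Set.ncard_preimage_of_injective_subset_range spoke_injective
      ((hE.trans S.edgeSet_subset).trans edgeSet_star_subset_range_spoke)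
  rw [orientedImbalance, agreeSet, ← Set.preimage_inter, hrange _ subset_rfl,
    hrange _ Set.inter_subset_left]
  rfl

lemma ncard_agreeSet_le (u : Unit ⊕ Fin ℓ) :
    (agreeSet σ u).ncard ≤ (outSet σ).ncard + 1 ∧
      (agreeSet σ u)ᶜ.ncard ≤ (outSet σ)ᶜ.ncard + 1 := by
  rcases u with ⟨⟩ | j
  · rw [agreeSet_center]
    omega
  · have hoff : ∀ i ≠ j, (i ∈ agreeSet σ (Sum.inr j) ↔ i ∈ outSet σ) := fun i hi =>
      mem_agreeSet_of_ne (by simpa using (Ne.symm hi))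
    constructor
    · refine (Set.ncard_le_ncard fun i hi => ?_).trans (Set.ncard_insert_le j _)
      by_cases hij : i = j
      exacts [.inl hij, .inr ((hoff i hij).1 hi)]
    · refine (Set.ncard_le_ncard fun i hi => ?_).trans (Set.ncard_insert_le j _)
      by_cases hij : i = j
      exacts [.inl hij, .inr fun h => hi ((hoff i hij).2 h)]

theorem orientedImbalance_le {b : ℕ} (hK : (outSet σ).ncard ≤ b) (hKc : (outSet σ)ᶜ.ncard ≤ b)
    (S : (star ℓ).Subgraph) (u : Unit ⊕ Fin ℓ) :
    (star ℓ).orientedImbalance σ S u ≤ b + 1 := by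
  rw [orientedImbalance_star_eq]
  obtain ⟨hQ, hQc⟩ := ncard_agreeSet_le (σ := σ) u
  exact_mod_cast Set.abs_two_mul_ncard_inter_sub_ncard_le _ (b := b + 1) (by omega) (by omega)

def orientationOf (K : Set (Fin ℓ)) : Unit ⊕ Fin ℓ → Unit ⊕ Fin ℓ → Prop
  | Sum.inl _, Sum.inr i => i ∈ K
  | Sum.inr i, Sum.inl _ => i ∉ K
  | _, _ => False

lemma isOrientation_orientationOf (K : Set (Fin ℓ)) :
    (star ℓ).IsOrientation (orientationOf K) := by
  rintro (⟨⟩ | i) (⟨⟩ | j) h <;> simp_all [orientationOf]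

def starOn (A : Set (Fin ℓ)) : (star ℓ).Subgraph :=
  (⊤ : (star ℓ).Subgraph).induce (insert center (Sum.inr '' A))

lemma center_mem_starOn (A : Set (Fin ℓ)) : center ∈ (starOn A).verts := Set.mem_insert _ _

lemma leaf_mem_starOn {A : Set (Fin ℓ)} {j : Fin ℓ} (hj : j ∈ A) :
    Sum.inr j ∈ (starOn A).verts :=
  Set.mem_insert_of_mem _ (Set.mem_image_of_mem _ hj)

lemma starOn_connected (A : Set (Fin ℓ)) : (starOn A).Connected :=
  Subgraph.induce_top_connected_of_forall_adj (center_mem_starOn A) <| by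
    rintro (⟨⟩ | i) _ hne
    exacts [absurd rfl hne, by simp]

lemma preimage_spoke_edgeSet_starOn (A : Set (Fin ℓ)) : spoke ⁻¹' (starOn A).edgeSet = A := by
  ext i
  simp [starOn, spoke]

lemma orientedImbalance_starOn_of_subset {A : Set (Fin ℓ)} {u : Unit ⊕ Fin ℓ}
    (h : A ⊆ agreeSet σ u) : (star ℓ).orientedImbalance σ (starOn A) u = A.ncard := by
  rw [orientedImbalance_star_eq, preimage_spoke_edgeSet_starOn, Set.inter_eq_left.2 h, two_mul,
    add_sub_cancel_right, Nat.abs_cast]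

lemma orientedImbalance_starOn_of_disjoint {A : Set (Fin ℓ)} {u : Unit ⊕ Fin ℓ}
    (h : Disjoint A (agreeSet σ u)) : (star ℓ).orientedImbalance σ (starOn A) u = A.ncard := by
  rw [orientedImbalance_star_eq, preimage_spoke_edgeSet_starOn, h.inter_eq]
  simp

lemma orientedImbalance_starOn_outSet :
    (star ℓ).orientedImbalance σ (starOn (outSet σ)) center = (outSet σ).ncard :=
  orientedImbalance_starOn_of_subset agreeSet_center.ge

lemma orientedImbalance_starOn_compl_outSet :
    (star ℓ).orientedImbalance σ (starOn (outSet σ)ᶜ) center = (outSet σ)ᶜ.ncard :=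
  orientedImbalance_starOn_of_disjoint (agreeSet_center ▸ disjoint_compl_left)

lemma orientedImbalance_starOn_insert_outSet (hσ : (star ℓ).IsOrientation σ) {j : Fin ℓ}
    (hj : j ∉ outSet σ) :
    (star ℓ).orientedImbalance σ (starOn (insert j (outSet σ))) (Sum.inr j) =
      (outSet σ).ncard + 1 := by
  rw [orientedImbalance_starOn_of_subset, Set.ncard_insert_of_notMem hj, Nat.cast_succ]
  rintro i (rfl | hi)
  · exact (mem_agreeSet_self hσ i).2 hj
  · exact (mem_agreeSet_of_ne (by rintro ⟨⟩; exact hj hi)).2 hi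

lemma orientedImbalance_starOn_insert_compl_outSet (hσ : (star ℓ).IsOrientation σ) {j : Fin ℓ}
    (hj : j ∈ outSet σ) :
    (star ℓ).orientedImbalance σ (starOn (insert j (outSet σ)ᶜ)) (Sum.inr j) =
      (outSet σ)ᶜ.ncard + 1 := by
  rw [orientedImbalance_starOn_of_disjoint, Set.ncard_insert_of_notMem (by simpa),
    Nat.cast_succ]
  refine Set.disjoint_left.2 ?_
  rintro i (rfl | hi)
  · exact fun h => (mem_agreeSet_self hσ i).1 h hj
  · exact fun h => hi ((mem_agreeSet_of_ne (by rintro ⟨⟩; exact hi hj)).1 h)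

theorem exists_orientedImbalance_ge (hσ : (star ℓ).IsOrientation σ) (hℓ : 2 ≤ ℓ) :
    ∃ S : (star ℓ).Subgraph, S.Connected ∧ ∃ u ∈ S.verts,
      (((ℓ + 1) / 2 : ℕ) : ℤ) + 1 ≤ (star ℓ).orientedImbalance σ S u := by
  have hsum : (outSet σ).ncard + (outSet σ)ᶜ.ncard = ℓ := by
    simpa using Set.ncard_add_ncard_compl (outSet σ)
  by_cases hbig : ℓ ≤ 2 * (outSet σ).ncard
  · rcases (outSet σ)ᶜ.eq_empty_or_nonempty with hfull | ⟨j, hj⟩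
    · refine ⟨starOn (outSet σ), starOn_connected _, _, center_mem_starOn _, ?_⟩
      rw [orientedImbalance_starOn_outSet]
      rw [(Set.ncard_eq_zero).2 hfull] at hsum
      omega
    · refine ⟨starOn (insert j (outSet σ)), starOn_connected _, _,
        leaf_mem_starOn (Set.mem_insert j _), ?_⟩
      rw [orientedImbalance_starOn_insert_outSet hσ hj]
      omega
  · rcases (outSet σ).eq_empty_or_nonempty with hempty | ⟨j, hj⟩
    · refine ⟨starOn (outSet σ)ᶜ, starOn_connected _, _, center_mem_starOn _, ?_⟩
      rw [orientedImbalance_starOn_compl_outSet]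
      rw [(Set.ncard_eq_zero).2 hempty] at hsum
      omega
    · refine ⟨starOn (insert j (outSet σ)ᶜ), starOn_connected _, _,
        leaf_mem_starOn (Set.mem_insert j _), ?_⟩
      rw [orientedImbalance_starOn_insert_compl_outSet hσ hj]
      omega

end StarDiscrepancy

open StarDiscrepancy in
/-- **Oriented discrepancy of the star.**
For every `ℓ ≥ 2`, the oriented discrepancy of directed rooted subtrees of the star `S_ℓ`
with `ℓ` leaves equals `⌈ℓ/2⌉ + 1`: some orientation has all rooted-subtree oriented
imbalances at most `⌈ℓ/2⌉ + 1`, and every orientation admits a rooted subtree with oriented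
imbalance at least `⌈ℓ/2⌉ + 1`. -/
theorem star_oriented_discrepancy_eq (ℓ : ℕ) (hℓ : 2 ≤ ℓ) :
    (∃ σ : (Unit ⊕ Fin ℓ) → (Unit ⊕ Fin ℓ) → Prop,
      (∀ u v, (completeBipartiteGraph Unit (Fin ℓ)).Adj u v → (σ u v ↔ ¬ σ v u)) ∧
      ∀ S : (completeBipartiteGraph Unit (Fin ℓ)).Subgraph, S.Connected → ∀ u ∈ S.verts,
        |2 * (({e ∈ S.edgeSet | ∃ x y, e = s(x, y) ∧
              (completeBipartiteGraph Unit (Fin ℓ)).dist u y =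
                (completeBipartiteGraph Unit (Fin ℓ)).dist u x + 1 ∧ σ x y} :
              Set (Sym2 (Unit ⊕ Fin ℓ))).ncard : ℤ)
          - (S.edgeSet.ncard : ℤ)| ≤ (⌈(ℓ : ℚ) / 2⌉ : ℤ) + 1) ∧
    (∀ σ : (Unit ⊕ Fin ℓ) → (Unit ⊕ Fin ℓ) → Prop,
      (∀ u v, (completeBipartiteGraph Unit (Fin ℓ)).Adj u v → (σ u v ↔ ¬ σ v u)) →
      ∃ S : (completeBipartiteGraph Unit (Fin ℓ)).Subgraph, S.Connected ∧ ∃ u ∈ S.verts,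
        (⌈(ℓ : ℚ) / 2⌉ : ℤ) + 1 ≤
          |2 * (({e ∈ S.edgeSet | ∃ x y, e = s(x, y) ∧
              (completeBipartiteGraph Unit (Fin ℓ)).dist u y =
                (completeBipartiteGraph Unit (Fin ℓ)).dist u x + 1 ∧ σ x y} :
              Set (Sym2 (Unit ⊕ Fin ℓ))).ncard : ℤ)
            - (S.edgeSet.ncard : ℤ)|) := by
  rw [Rat.ceil_natCast_div_two]
  set t := (ℓ + 1) / 2
  set σ := orientationOf {i : Fin ℓ | (i : ℕ) < t}
  have hK : (outSet σ).ncard = t := Fin.ncard_setOf_val_lt (by omega)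
  have hKc : (outSet σ)ᶜ.ncard = ℓ - t := by
    rw [Set.ncard_compl, hK, Nat.card_eq_fintype_card, Fintype.card_fin]
  exact ⟨⟨σ, isOrientation_orientationOf _,
      fun S _ u _ => orientedImbalance_le hK.le (by omega) S u⟩,
    fun σ hσ => exists_orientedImbalance_ge hσ hℓ⟩
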